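/- Let (f, 𝔣) and (g, 𝔤) be nonzero pseudo-polynomials over a Dedekind domain R such that LM(f) and LM(g) are coprime monomials and the ideals 𝔣·LC(f) and 𝔤·LC(g) are coprime integral ideals of R. Then the S-polynomial spoly((f,𝔣),(g,𝔤)) reduces to 0 modulo {(f,𝔣),(g,𝔤)}. -/

import Mathlib

/-!
With `a = LC f` and `b = LC g`, coprimality of the leading monomials turns the S-polynomial into
`U f + V g` with `U = (ab)⁻¹ (LT g - g)` and `V = (ab)⁻¹ (f - LT f)`, so that every monomial of `U`
is below `LM g` and every monomial of `V` is below `LM f`. For such `U` and `V` the leading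
monomials of `U f` and `V g` cannot coincide: `LM(U) LM(f) = LM(V) LM(g)` would force `LM g ∣ LM U`.
Hence the leading term of `U f + V g` is that of `U f` or of `V g`, and one reduction step by `f`
or by `g` removes the leading term of `U` or of `V`; induction on the number of terms ends at `0`.

For the coefficients, coprimality of the integral ideals `𝔣a` and `𝔤b` makes their intersection
`𝔰` equal to their product, so `𝔣 𝔰⁻¹ = (ab)⁻¹ 𝔤⁻¹` and `𝔤 𝔰⁻¹ = (ab)⁻¹ 𝔣⁻¹`; these contain the
coefficients of `U` and `V` because `g` and `f` have coefficients in `𝔤⁻¹` and `𝔣⁻¹`.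
-/

open MvPolynomial

noncomputable def mdeg {σ : Type*} (m : MonomialOrder σ) {K : Type*} [CommSemiring K]
    (f : MvPolynomial σ K) : σ →₀ ℕ :=
  m.toSyn.symm (f.support.sup fun d => m.toSyn d)

noncomputable def plc {σ : Type*} (m : MonomialOrder σ) {K : Type*} [CommSemiring K]
    (f : MvPolynomial σ K) : K :=
  f.coeff (mdeg m f)

/-- One step reduction of `(f, 𝔣)` to `(h, 𝔣)` with respect to the family of
pseudo-polynomials `(gᵢ, 𝔤ᵢ)`: there are `aᵢ ∈ 𝔤ᵢ 𝔣⁻¹`, supported on the set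
`J = {i : LM(gᵢ) ∣ LM(f)}`, with `LC(f) = ∑ aᵢ LC(gᵢ)` and
`h = f - ∑ aᵢ x^{deg f - deg gᵢ} gᵢ`. -/
def OneStep {R : Type*} [CommRing R] [IsDomain R] [IsDedekindDomain R] {n l : ℕ}
    (m : MonomialOrder (Fin n))
    (g : Fin l → MvPolynomial (Fin n) (FractionRing R))
    (𝔤 : Fin l → FractionalIdeal (nonZeroDivisors R) (FractionRing R))
    (𝔣 : FractionalIdeal (nonZeroDivisors R) (FractionRing R))
    (f h : MvPolynomial (Fin n) (FractionRing R)) : Prop :=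
  ∃ a : Fin l → FractionRing R,
    (∀ i, a i ∈ 𝔤 i * 𝔣⁻¹) ∧
    (∀ i, a i ≠ 0 → ∃ γ, mdeg m f = mdeg m (g i) + γ) ∧
    plc m f = ∑ i, a i * plc m (g i) ∧
    h = f - ∑ i, (monomial (mdeg m f - mdeg m (g i)) (a i)) * g i

open scoped MonomialOrder

lemma mdeg_eq_degree {σ K : Type*} [CommSemiring K] (m : MonomialOrder σ) (f : MvPolynomial σ K) :
    mdeg m f = m.degree f := rfl

lemma plc_eq_leadingCoeff {σ K : Type*} [CommSemiring K] (m : MonomialOrder σ)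
    (f : MvPolynomial σ K) : plc m f = m.leadingCoeff f := rfl

lemma Finsupp.add_ne_add_of_inf_eq_zero {σ : Type*} {a b u v : σ →₀ ℕ} (hab : a ⊓ b = 0)
    (hbu : ¬b ≤ u) : u + a ≠ v + b := by
  refine fun h => hbu fun i => ?_
  have hi := DFunLike.congr_fun h i
  have hmin := DFunLike.congr_fun hab i
  simp only [Finsupp.coe_add, Pi.add_apply, Finsupp.inf_apply, Finsupp.coe_zero,
    Pi.zero_apply] at hi hmin
  omega

lemma Finsupp.sup_eq_add_of_inf_eq_zero {σ : Type*} {a b : σ →₀ ℕ} (hab : a ⊓ b = 0) :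
    a ⊔ b = a + b := by
  ext i
  have hmin := DFunLike.congr_fun hab i
  simp only [Finsupp.inf_apply, Finsupp.coe_zero, Pi.zero_apply] at hmin
  simp only [Finsupp.sup_apply, Finsupp.coe_add, Pi.add_apply]
  omega

namespace MonomialOrder

variable {σ K : Type*} {m : MonomialOrder σ}

lemma coeff_sub_leadingTerm [CommRing K] [DecidableEq σ] (p : MvPolynomial σ K)
    (d : σ →₀ ℕ) :
    (p - m.leadingTerm p).coeff d = if d = m.degree p then 0 else p.coeff d := by
  rw [coeff_sub, leadingTerm, coeff_monomial]
  by_cases h : d = m.degree p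
  · simp [h, leadingCoeff]
  · simp [h, Ne.symm h]

lemma support_sub_leadingTerm [CommRing K] [DecidableEq σ] (p : MvPolynomial σ K) :
    (p - m.leadingTerm p).support = p.support.erase (m.degree p) := by
  ext d
  rw [mem_support_iff, coeff_sub_leadingTerm, Finset.mem_erase, mem_support_iff]
  split_ifs with h <;> simp [h]

lemma support_sub_leadingTerm_subset [CommRing K] (p : MvPolynomial σ K) :
    (p - m.leadingTerm p).support ⊆ p.support := by
  classical
  rw [support_sub_leadingTerm]
  exact Finset.erase_subset _ _

lemma lt_degree_of_mem_support_sub_leadingTerm [CommRing K] {p : MvPolynomial σ K}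
    {d : σ →₀ ℕ} (hd : d ∈ (p - m.leadingTerm p).support) : d ≺[m] m.degree p := by
  classical
  rw [support_sub_leadingTerm, Finset.mem_erase] at hd
  exact lt_of_le_of_ne (m.le_degree hd.2) (m.toSyn.injective.ne hd.1)

lemma card_support_sub_leadingTerm_lt [CommRing K] [DecidableEq σ] {p : MvPolynomial σ K}
    (hp : p ≠ 0) : (p - m.leadingTerm p).support.card < p.support.card := by
  rw [support_sub_leadingTerm]
  exact Finset.card_erase_lt_of_mem (m.degree_mem_support hp)

lemma lt_of_mem_support_mul [CommSemiring K] {p q : MvPolynomial σ K} {d e : σ →₀ ℕ}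
    (hd : m.degree p + m.degree q ≺[m] d) (he : e ∈ (p * q).support) : e ≺[m] d :=
  ((m.le_degree he).trans m.degree_mul_le).trans_lt hd

noncomputable def monicSPolynomial [Field K] (m : MonomialOrder σ) (f g : MvPolynomial σ K) :
    MvPolynomial σ K :=
  monomial (m.degree f ⊔ m.degree g - m.degree f) (m.leadingCoeff f)⁻¹ * f -
    monomial (m.degree f ⊔ m.degree g - m.degree g) (m.leadingCoeff g)⁻¹ * g

lemma monicSPolynomial_eq_of_inf_degree_eq_zero [Field K] {f g : MvPolynomial σ K} (hf : f ≠ 0)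
    (hg : g ≠ 0) (hcop : m.degree f ⊓ m.degree g = 0) :
    m.monicSPolynomial f g =
      ((m.leadingCoeff f * m.leadingCoeff g)⁻¹ • (m.leadingTerm g - g)) * f +
        ((m.leadingCoeff f * m.leadingCoeff g)⁻¹ • (f - m.leadingTerm f)) * g := by
  have hf' := m.leadingCoeff_ne_zero_iff.mpr hf
  have hg' := m.leadingCoeff_ne_zero_iff.mpr hg
  have hmf : monomial (m.degree f) (m.leadingCoeff g)⁻¹ =
      C (m.leadingCoeff f * m.leadingCoeff g)⁻¹ * m.leadingTerm f := by
    rw [leadingTerm, C_mul_monomial]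
    congr 1
    field_simp
  have hmg : monomial (m.degree g) (m.leadingCoeff f)⁻¹ =
      C (m.leadingCoeff f * m.leadingCoeff g)⁻¹ * m.leadingTerm g := by
    rw [leadingTerm, C_mul_monomial]
    congr 1
    field_simp
  rw [monicSPolynomial, Finsupp.sup_eq_add_of_inf_eq_zero hcop, add_tsub_cancel_left,
    add_tsub_cancel_right, hmf, hmg, smul_eq_C_mul, smul_eq_C_mul]
  ring

end MonomialOrder

namespace FractionalIdeal

lemma neg_mem {R P : Type*} [CommRing R] [CommRing P] [Algebra R P]
    {S : Submonoid R} {I : FractionalIdeal S P} {x : P} (hx : x ∈ I) : -x ∈ I :=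
  I.coeToSubmodule.neg_mem hx

lemma inf_eq_mul_of_add_eq_one {R P : Type*} [CommRing R] [CommRing P] [Algebra R P]
    {S : Submonoid R} {I J : FractionalIdeal S P} (hI : I ≤ 1) (hJ : J ≤ 1) (h : I + J = 1) :
    I ⊓ J = I * J := by
  refine le_antisymm ?_ (le_inf (mul_le_of_le_one_right' hJ) (mul_le_of_le_one_left' hI))
  calc I ⊓ J = (I ⊓ J) * I + (I ⊓ J) * J := by rw [← mul_add, h, mul_one]
    _ ≤ J * I + I * J := add_le_add (mul_le_mul_left inf_le_right I)
        (mul_le_mul_left inf_le_left J)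
    _ = I * J := by rw [mul_comm J I, ← sup_eq_add, sup_idem]

lemma mul_spanSingleton_le_one {R K : Type*} [CommRing R] [IsDomain R] [Field K] [Algebra R K]
    [IsFractionRing R K] {I : FractionalIdeal (nonZeroDivisors R) K} {x : K} (hx : x ∈ I⁻¹) :
    I * spanSingleton (nonZeroDivisors R) x ≤ 1 :=
  (mul_le_mul_right (spanSingleton_le_iff_mem.mpr hx) I).trans
    (inv_eq (I := I) ▸ mul_one_div_le_one)

variable {R : Type*} [CommRing R] [IsDedekindDomain R]
  {𝔣 𝔤 : FractionalIdeal (nonZeroDivisors R) (FractionRing R)}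

lemma mul_inv_mul_spanSingleton (h𝔣 : 𝔣 ≠ 0) (a b : FractionRing R) :
    𝔣 * (𝔣 * spanSingleton (nonZeroDivisors R) a * (𝔤 * spanSingleton (nonZeroDivisors R) b))⁻¹ =
      spanSingleton (nonZeroDivisors R) (a * b)⁻¹ * 𝔤⁻¹ := by
  rw [mul_inv, mul_inv, mul_inv, spanSingleton_inv, spanSingleton_inv, mul_inv,
    ← spanSingleton_mul_spanSingleton, ← mul_assoc, ← mul_assoc, mul_inv_cancel_left₀ h𝔣]
  ring

lemma inv_mul_mem_mul_inv_mul_spanSingleton (h𝔣 : 𝔣 ≠ 0) {a b x : FractionRing R}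
    (hx : x ∈ 𝔤⁻¹) :
    (a * b)⁻¹ * x ∈ 𝔣 *
      (𝔣 * spanSingleton (nonZeroDivisors R) a * (𝔤 * spanSingleton (nonZeroDivisors R) b))⁻¹ := by
  rw [mul_inv_mul_spanSingleton h𝔣]
  exact mul_mem_mul (mem_spanSingleton_self _ _) hx

end FractionalIdeal

lemma coeff_sub_leadingTerm_mem {σ R P : Type*} [CommRing R] [CommRing P] [Algebra R P]
    {S : Submonoid R} {m : MonomialOrder σ} {p : MvPolynomial σ P} {I : FractionalIdeal S P}
    (hp : ∀ d, p.coeff d ∈ I) (d : σ →₀ ℕ) : (p - m.leadingTerm p).coeff d ∈ I := by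
  classical
  rw [MonomialOrder.coeff_sub_leadingTerm]
  split_ifs
  exacts [I.zero_mem, hp d]

section Reduction

variable {R : Type*} [CommRing R] [IsDedekindDomain R] {n : ℕ}
  {m : MonomialOrder (Fin n)} {𝔰 : FractionalIdeal (nonZeroDivisors R) (FractionRing R)}

lemma oneStep_sub_monomial_mul {l : ℕ} {g : Fin l → MvPolynomial (Fin n) (FractionRing R)}
    {𝔤 : Fin l → FractionalIdeal (nonZeroDivisors R) (FractionRing R)}
    {p : MvPolynomial (Fin n) (FractionRing R)} (i : Fin l)
    (d : Fin n →₀ ℕ) {c : FractionRing R} (hc : c ∈ 𝔤 i * 𝔰⁻¹)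
    (hdeg : m.degree p = d + m.degree (g i))
    (hlc : m.leadingCoeff p = c * m.leadingCoeff (g i)) :
    OneStep m g 𝔤 𝔰 p (p - monomial d c * g i) := by
  refine ⟨Pi.single i c, fun j => ?_, fun j hj => ?_, ?_, ?_⟩
  · rcases eq_or_ne j i with rfl | hji
    · rwa [Pi.single_eq_same]
    · rw [Pi.single_eq_of_ne hji]
      exact FractionalIdeal.zero_mem _
  · obtain rfl : j = i := by_contra fun hji => hj (Pi.single_eq_of_ne hji _)
    exact ⟨d, by rw [mdeg_eq_degree, mdeg_eq_degree, hdeg, add_comm]⟩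
  · rw [Fintype.sum_eq_single i fun j hji => by rw [Pi.single_eq_of_ne hji, zero_mul],
      Pi.single_eq_same]
    exact hlc
  · have hsum := Fintype.sum_eq_single (f := fun j =>
      monomial (mdeg m p - mdeg m (g j)) ((Pi.single i c : Fin l → FractionRing R) j) * g j) i
      fun j hji => by rw [Pi.single_eq_of_ne hji, monomial_zero, zero_mul]
    rw [hsum, Pi.single_eq_same, mdeg_eq_degree, mdeg_eq_degree, hdeg, add_tsub_cancel_right]

lemma oneStep_mul_add {l : ℕ} {g : Fin l → MvPolynomial (Fin n) (FractionRing R)}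
    {𝔤 : Fin l → FractionalIdeal (nonZeroDivisors R) (FractionRing R)}
    {U Q : MvPolynomial (Fin n) (FractionRing R)} (i : Fin l)
    (hU : U ≠ 0) (hg : g i ≠ 0) (hUc : ∀ d, U.coeff d ∈ 𝔤 i * 𝔰⁻¹)
    (hQ : ∀ e ∈ Q.support, e ≺[m] m.degree U + m.degree (g i)) :
    OneStep m g 𝔤 𝔰 (U * g i + Q) ((U - m.leadingTerm U) * g i + Q) := by
  have hdeg : m.degree (U * g i) = m.degree U + m.degree (g i) := m.degree_mul hU hg
  have hQlt : Q = 0 ∨ m.degree Q ≺[m] m.degree (U * g i) := by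
    rw [or_iff_not_imp_left, hdeg]
    exact fun hQ0 => hQ _ (m.degree_mem_support hQ0)
  have hlead : m.degree (U * g i + Q) = m.degree U + m.degree (g i) ∧
      m.leadingCoeff (U * g i + Q) = m.leadingCoeff U * m.leadingCoeff (g i) := by
    rcases hQlt with rfl | hlt
    · rw [add_zero, m.leadingCoeff_mul]
      exact ⟨hdeg, rfl⟩
    · rw [m.degree_add_of_lt hlt, m.leadingCoeff_add_of_lt hlt, m.leadingCoeff_mul]
      exact ⟨hdeg, rfl⟩
  convert oneStep_sub_monomial_mul i (m.degree U) (hUc _) hlead.1 hlead.2 using 1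
  rw [MonomialOrder.leadingTerm, MonomialOrder.leadingCoeff]
  ring

theorem reflTransGen_oneStep_mul_add_mul {f g : MvPolynomial (Fin n) (FractionRing R)}
    {𝔣 𝔤 : FractionalIdeal (nonZeroDivisors R) (FractionRing R)} (hf : f ≠ 0) (hg : g ≠ 0)
    (hcop : m.degree f ⊓ m.degree g = 0) (U V : MvPolynomial (Fin n) (FractionRing R))
    (hUc : ∀ d, U.coeff d ∈ 𝔣 * 𝔰⁻¹) (hVc : ∀ d, V.coeff d ∈ 𝔤 * 𝔰⁻¹)
    (hU : ∀ d ∈ U.support, d ≺[m] m.degree g) (hV : ∀ d ∈ V.support, d ≺[m] m.degree f) :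
    Relation.ReflTransGen (OneStep m ![f, g] ![𝔣, 𝔤] 𝔰) (U * f + V * g) 0 := by
  induction hN : U.support.card + V.support.card using Nat.strong_induction_on
    generalizing U V with
  | _ N ih =>
  have reduceU (hU0 : U ≠ 0) (hlt : ∀ e ∈ (V * g).support, e ≺[m] m.degree U + m.degree f) :
      Relation.ReflTransGen (OneStep m ![f, g] ![𝔣, 𝔤] 𝔰) (U * f + V * g) 0 := by
    have hcard := MonomialOrder.card_support_sub_leadingTerm_lt (m := m) hU0
    exact .head (oneStep_mul_add (g := ![f, g]) 0 hU0 hf hUc hlt)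
      (ih _ (by omega) _ V (coeff_sub_leadingTerm_mem hUc) hVc
        (fun d hd => hU d (MonomialOrder.support_sub_leadingTerm_subset U hd)) hV rfl)
  have reduceV (hV0 : V ≠ 0) (hlt : ∀ e ∈ (U * f).support, e ≺[m] m.degree V + m.degree g) :
      Relation.ReflTransGen (OneStep m ![f, g] ![𝔣, 𝔤] 𝔰) (U * f + V * g) 0 := by
    have hcard := MonomialOrder.card_support_sub_leadingTerm_lt (m := m) hV0
    rw [add_comm]
    refine .head (oneStep_mul_add (g := ![f, g]) 1 hV0 hg hVc hlt) ?_
    rw [add_comm]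
    exact ih _ (by omega) U _ hUc (coeff_sub_leadingTerm_mem hVc) hU
      (fun d hd => hV d (MonomialOrder.support_sub_leadingTerm_subset V hd)) rfl
  rcases eq_or_ne U 0 with rfl | hU0
  · rcases eq_or_ne V 0 with rfl | hV0
    · simpa using Relation.ReflTransGen.refl
    · exact reduceV hV0 (by simp)
  rcases eq_or_ne V 0 with rfl | hV0
  · exact reduceU hU0 (by simp)
  have hne : m.toSyn (m.degree U + m.degree f) ≠ m.toSyn (m.degree V + m.degree g) :=
    m.toSyn.injective.ne <| Finsupp.add_ne_add_of_inf_eq_zero hcop fun hle =>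
      (hU _ (m.degree_mem_support hU0)).not_ge (m.toSyn_monotone hle)
  rcases hne.lt_or_gt with hlt | hlt
  · exact reduceV hV0 fun e he => MonomialOrder.lt_of_mem_support_mul hlt he
  · exact reduceU hU0 fun e he => MonomialOrder.lt_of_mem_support_mul hlt he

end Reduction

theorem stmt18_general {R : Type*} [CommRing R] [IsDedekindDomain R] {n : ℕ}
    (m : MonomialOrder (Fin n))
    (f g : MvPolynomial (Fin n) (FractionRing R))
    (𝔣 𝔤 : FractionalIdeal (nonZeroDivisors R) (FractionRing R))
    (hf : f ≠ 0) (hg : g ≠ 0) (h𝔣 : 𝔣 ≠ 0) (h𝔤 : 𝔤 ≠ 0)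
    (hpf : ∀ c ∈ 𝔣, ∀ d, c * f.coeff d ∈
      (1 : FractionalIdeal (nonZeroDivisors R) (FractionRing R)))
    (hpg : ∀ c ∈ 𝔤, ∀ d, c * g.coeff d ∈
      (1 : FractionalIdeal (nonZeroDivisors R) (FractionRing R)))
    (hlmcop : mdeg m f ⊓ mdeg m g = 0)
    (hlccop : 𝔣 * FractionalIdeal.spanSingleton (nonZeroDivisors R) (plc m f) +
        𝔤 * FractionalIdeal.spanSingleton (nonZeroDivisors R) (plc m g) = 1) :
    Relation.ReflTransGen (OneStep m ![f, g] ![𝔣, 𝔤]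
        (𝔣 * FractionalIdeal.spanSingleton (nonZeroDivisors R) (plc m f) ⊓
          𝔤 * FractionalIdeal.spanSingleton (nonZeroDivisors R) (plc m g)))
      (monomial (mdeg m f ⊔ mdeg m g - mdeg m f) (plc m f)⁻¹ * f -
        monomial (mdeg m f ⊔ mdeg m g - mdeg m g) (plc m g)⁻¹ * g)
      0 := by
  simp only [mdeg_eq_degree, plc_eq_leadingCoeff] at hlmcop hlccop ⊢
  have hfc (d) : f.coeff d ∈ 𝔣⁻¹ :=
    (FractionalIdeal.mem_inv_iff h𝔣).mpr fun c hc => mul_comm c _ ▸ hpf c hc d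
  have hgc (d) : g.coeff d ∈ 𝔤⁻¹ :=
    (FractionalIdeal.mem_inv_iff h𝔤).mpr fun c hc => mul_comm c _ ▸ hpg c hc d
  have hI := FractionalIdeal.mul_spanSingleton_le_one (x := m.leadingCoeff f) (hfc _)
  have hJ := FractionalIdeal.mul_spanSingleton_le_one (x := m.leadingCoeff g) (hgc _)
  rw [FractionalIdeal.inf_eq_mul_of_add_eq_one hI hJ hlccop,
    ← MonomialOrder.monicSPolynomial, m.monicSPolynomial_eq_of_inf_degree_eq_zero hf hg hlmcop]
  refine reflTransGen_oneStep_mul_add_mul hf hg hlmcop _ _ (fun d => ?_) (fun d => ?_)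
    (fun d hd => ?_) (fun d hd => ?_)
  · rw [coeff_smul, smul_eq_mul, ← neg_sub, coeff_neg]
    exact FractionalIdeal.inv_mul_mem_mul_inv_mul_spanSingleton h𝔣
      (FractionalIdeal.neg_mem (coeff_sub_leadingTerm_mem hgc d))
  · rw [coeff_smul, smul_eq_mul, mul_comm (𝔣 * _), mul_comm (m.leadingCoeff f)]
    exact FractionalIdeal.inv_mul_mem_mul_inv_mul_spanSingleton h𝔤
      (coeff_sub_leadingTerm_mem hfc d)
  · rw [← neg_sub] at hd
    exact MonomialOrder.lt_degree_of_mem_support_sub_leadingTerm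
      (support_neg (p := g - m.leadingTerm g) ▸ support_smul hd)
  · exact MonomialOrder.lt_degree_of_mem_support_sub_leadingTerm (support_smul hd)

/-- product criterion: Let `(f, 𝔣)` and `(g, 𝔤)` be nonzero
pseudo-polynomials over a Dedekind domain `R` such that `LM(f)` and `LM(g)` are
coprime monomials (`gcd = 1`) and `𝔣·LC(f)`, `𝔤·LC(g)` are coprime integral ideals
of `R`. Then `spoly((f,𝔣),(g,𝔤))` reduces to `0` modulo `{(f,𝔣),(g,𝔤)}`. -/
theorem stmt18 {R : Type*} [CommRing R] [IsDomain R] [IsDedekindDomain R] {n : ℕ}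
    (m : MonomialOrder (Fin n))
    (f g : MvPolynomial (Fin n) (FractionRing R))
    (𝔣 𝔤 : FractionalIdeal (nonZeroDivisors R) (FractionRing R))
    (hf : f ≠ 0) (hg : g ≠ 0) (h𝔣 : 𝔣 ≠ 0) (h𝔤 : 𝔤 ≠ 0)
    (hpf : ∀ c ∈ 𝔣, ∀ d, c * f.coeff d ∈
      (1 : FractionalIdeal (nonZeroDivisors R) (FractionRing R)))
    (hpg : ∀ c ∈ 𝔤, ∀ d, c * g.coeff d ∈
      (1 : FractionalIdeal (nonZeroDivisors R) (FractionRing R)))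
    (hlmcop : mdeg m f ⊓ mdeg m g = 0)
    (hlccop : 𝔣 * FractionalIdeal.spanSingleton (nonZeroDivisors R) (plc m f) +
        𝔤 * FractionalIdeal.spanSingleton (nonZeroDivisors R) (plc m g) = 1) :
    Relation.ReflTransGen (OneStep m ![f, g] ![𝔣, 𝔤]
        (𝔣 * FractionalIdeal.spanSingleton (nonZeroDivisors R) (plc m f) ⊓
          𝔤 * FractionalIdeal.spanSingleton (nonZeroDivisors R) (plc m g)))
      (monomial (mdeg m f ⊔ mdeg m g - mdeg m f) (plc m f)⁻¹ * f -
        monomial (mdeg m f ⊔ mdeg m g - mdeg m g) (plc m g)⁻¹ * g)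
      0 :=
  stmt18_general m f g 𝔣 𝔤 hf hg h𝔣 h𝔤 hpf hpg hlmcop hlccop
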